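/- arXiv:1311.5066 — 2 statements merged into one kernel-verified Lean document; each statement's English description precedes it below -/
import Mathlib

section
/- Let A be an acyclic probabilistic finite automaton, let A^m be the result of merging two states v and w at the same level i < p of A, and let (·)⁺ denote completion. Then completion and merging commute: (A⁺)^m = (A^m)⁺, i.e. the APFA obtained by completing A and then merging v and w is identical to the APFA obtained by merging v and w in A and then completing. -/
open scoped Classical

universe u v w

/-- The raw data of a finite directed multigraph with edge symbols:
sources, targets, symbols, a root, a sink, and the common root-to-sink path length `p`. -/
structure PreAPFA (V : Type u) (E : Type v) (Sym : Type w) where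
  src : E → V
  tgt : E → V
  sym : E → Sym
  root : V
  sink : V
  p : ℕ

namespace PreAPFA

variable {V : Type u} {E : Type v} {Sym : Type w}

/-- `A.IsPathFrom u w es`: the list of edges `es` is a directed path from `u` to `w`. -/
def IsPathFrom (A : PreAPFA V E Sym) : V → V → List E → Prop
  | u, w, [] => u = w
  | u, w, e :: es => A.src e = u ∧ A.IsPathFrom (A.tgt e) w es

/-- `es` is a root-to-sink path. -/
def IsRootSink (A : PreAPFA V E Sym) (es : List E) : Prop :=
  A.IsPathFrom A.root A.sink es

/-- The node reached from `u` after traversing the edges `es`. -/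
def nodeAfter (A : PreAPFA V E Sym) : V → List E → V
  | u, [] => u
  | _, e :: es => A.nodeAfter (A.tgt e) es

/-- `x` is a node at level `i`: some path from the root to `x` has length `i`. -/
def HasLevel (A : PreAPFA V E Sym) (x : V) (i : ℕ) : Prop :=
  ∃ es : List E, A.IsPathFrom A.root x es ∧ es.length = i

end PreAPFA

/-- The graph of an acyclic probabilistic finite automaton: a finite directed multigraph
with a unique root (only outgoing edges) and unique sink (only incoming edges), distinct
symbols on the outgoing edges of every node, every node on a root-to-sink path, and all
root-to-sink paths of the same length `p`. -/
structure APFAGraph (V : Type u) (E : Type v) (Sym : Type w) [Fintype V] [Fintype E]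
    extends PreAPFA V E Sym where
  no_in_root : ∀ e : E, tgt e ≠ root
  no_out_sink : ∀ e : E, src e ≠ sink
  sym_inj : ∀ e f : E, src e = src f → sym e = sym f → e = f
  connected : ∀ x : V, ∃ es fs : List E,
    toPreAPFA.IsPathFrom root x es ∧ toPreAPFA.IsPathFrom x sink fs
  const_len : ∀ es : List E, toPreAPFA.IsRootSink es → es.length = p

/-- An acyclic probabilistic finite automaton (APFA): an `APFAGraph` together with
nonnegative edge probabilities summing to one on the outgoing edges of every non-sink node. -/
structure APFA (V : Type u) (E : Type v) (Sym : Type w) [Fintype V] [Fintype E]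
    extends APFAGraph V E Sym where
  prob : E → ℝ
  prob_nonneg : ∀ e : E, 0 ≤ prob e
  prob_sum : ∀ x : V, x ≠ sink → ∑ e : E, (if src e = x then prob e else 0) = 1


/-- `X_{i+1}` in the paper's notation: the set of symbols appearing on edges from a
level-`i` node to a level-`i+1` node. -/
def APFAGraph.symsAt {V : Type u} {E : Type v} {Sym : Type w} [Fintype V] [Fintype E]
    (A : APFAGraph V E Sym) (i : ℕ) : Set Sym :=
  {s | ∃ e : E, A.toPreAPFA.HasLevel (A.src e) i ∧ A.sym e = s}

/-- An APFA graph is *complete* if every level-`i` node with `i < p` has one outgoing edge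
for each symbol in `X_{i+1}` (equivalently, exactly `|X_{i+1}|` outgoing edges, since the
symbols on the outgoing edges of a node are distinct). -/
def APFAGraph.Complete {V : Type u} {E : Type v} {Sym : Type w} [Fintype V] [Fintype E]
    (A : APFAGraph V E Sym) : Prop :=
  ∀ (x : V) (i : ℕ), A.toPreAPFA.HasLevel x i → i < A.p →
    ∀ s ∈ A.symsAt i, ∃ e : E, A.src e = x ∧ A.sym e = s

/-- The node-merging relation generated by merging the node set `s`: nodes `x` and `y` are
(directly) merged iff they are corresponding descendants of two nodes `v, w ∈ s`, i.e.
there are paths `v → x` and `w → y` with identical symbol sequences. -/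
def PreAPFA.mergeRelV {V : Type u} {E : Type v} {Sym : Type w}
    (A : PreAPFA V E Sym) (s : Set V) (x y : V) : Prop :=
  ∃ v ∈ s, ∃ w ∈ s, ∃ es fs : List E,
    A.IsPathFrom v x es ∧ A.IsPathFrom w y fs ∧ es.map A.sym = fs.map A.sym

/-- The edge-merging relation generated by merging the node set `s`: edges `e` and `f` are
(directly) merged iff they are corresponding descendant edges of two nodes `v, w ∈ s`, i.e.
there are paths `v → tgt e` and `w → tgt f` with identical symbol sequences whose last
edges are `e` and `f`. -/
def PreAPFA.mergeRelE {V : Type u} {E : Type v} {Sym : Type w}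
    (A : PreAPFA V E Sym) (s : Set V) (e f : E) : Prop :=
  ∃ v ∈ s, ∃ w ∈ s, ∃ es fs : List E,
    A.IsPathFrom v (A.tgt e) (es ++ [e]) ∧ A.IsPathFrom w (A.tgt f) (fs ++ [f]) ∧
    (es ++ [e]).map A.sym = (fs ++ [f]).map A.sym

/-- `B` is the APFA obtained from `A` by merging the node set `s`, witnessed by the
surjections `φV`, `φE` identifying exactly the nodes (resp. edges) related by the
equivalence closure of the merging relation. -/
structure IsMergeOf {V : Type u} {E : Type v} {V' : Type u} {E' : Type v} {Sym : Type w}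
    [Fintype V] [Fintype E] [Fintype V'] [Fintype E']
    (A : APFA V E Sym) (s : Set V) (B : APFA V' E' Sym)
    (φV : V → V') (φE : E → E') : Prop where
  surjV : Function.Surjective φV
  surjE : Function.Surjective φE
  src_comm : ∀ e, B.src (φE e) = φV (A.src e)
  tgt_comm : ∀ e, B.tgt (φE e) = φV (A.tgt e)
  sym_comm : ∀ e, B.sym (φE e) = A.sym e
  root_comm : φV A.root = B.root
  sink_comm : φV A.sink = B.sink
  p_eq : B.p = A.p
  eqV : ∀ x y : V, φV x = φV y ↔ Relation.EqvGen (A.toPreAPFA.mergeRelV s) x y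
  eqE : ∀ e f : E, φE e = φE f ↔ Relation.EqvGen (A.toPreAPFA.mergeRelE s) e f

/-- `B` is the completion `A⁺` of `A`, witnessed by the embedding `(ιV, ιE)`:
`A` embeds in `B` compatibly with sources, targets, symbols, root, sink and `p`;
`B` is complete and has the same symbol sets `X_i` as `A`; every new node (not coming
from `A`) has exactly one incoming edge (the added descendant subgraphs are trees); and
every new edge targets either a new node or the sink. -/
structure IsCompletionOf {V : Type u} {E : Type v} {V' : Type u} {E' : Type v} {Sym : Type w}
    [Fintype V] [Fintype E] [Fintype V'] [Fintype E']
    (A : APFA V E Sym) (B : APFA V' E' Sym)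
    (ιV : V → V') (ιE : E → E') : Prop where
  injV : Function.Injective ιV
  injE : Function.Injective ιE
  src_comm : ∀ e, B.src (ιE e) = ιV (A.src e)
  tgt_comm : ∀ e, B.tgt (ιE e) = ιV (A.tgt e)
  sym_comm : ∀ e, B.sym (ιE e) = A.sym e
  root_comm : ιV A.root = B.root
  sink_comm : ιV A.sink = B.sink
  p_eq : B.p = A.p
  complete : B.toAPFAGraph.Complete
  syms_eq : ∀ i, B.toAPFAGraph.symsAt i = A.toAPFAGraph.symsAt i
  new_node_unique_in : ∀ x' : V', x' ∉ Set.range ιV → ∃! e' : E', B.tgt e' = x'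
  new_edge_tgt : ∀ e' : E', e' ∉ Set.range ιE → B.tgt e' ∈ Set.range ιV →
    B.tgt e' = B.sink


section Infra

namespace PreAPFA

variable {V : Type u} {E : Type v} {Sym : Type w}

lemma isPathFrom_append (A : PreAPFA V E Sym) {x z : V} {es fs : List E} :
    A.IsPathFrom x z (es ++ fs) ↔ ∃ y, A.IsPathFrom x y es ∧ A.IsPathFrom y z fs := by
  induction es generalizing x with
  | nil => simp [IsPathFrom]
  | cons e es ih =>
    simp only [List.cons_append, IsPathFrom, List.append_eq, ih]
    tauto

/-- `A.Reaches x s y`: some path from `x` to `y` carries the symbol string `s`. -/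
def Reaches (A : PreAPFA V E Sym) (x : V) (s : List Sym) (y : V) : Prop :=
  ∃ es, A.IsPathFrom x y es ∧ es.map A.sym = s

lemma reaches_nil (A : PreAPFA V E Sym) {x y : V} : A.Reaches x [] y ↔ x = y := by
  constructor
  · rintro ⟨es, hp, hm⟩
    cases es with
    | nil => exact hp
    | cons e es => simp at hm
  · rintro rfl; exact ⟨[], rfl, rfl⟩

lemma reaches_refl (A : PreAPFA V E Sym) (x : V) : A.Reaches x [] x := ⟨[], rfl, rfl⟩

lemma reaches_trans (A : PreAPFA V E Sym) {x y z : V} {s t : List Sym}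
    (h1 : A.Reaches x s y) (h2 : A.Reaches y t z) : A.Reaches x (s ++ t) z := by
  obtain ⟨es, hp, hm⟩ := h1
  obtain ⟨fs, hq, hn⟩ := h2
  exact ⟨es ++ fs, (A.isPathFrom_append).2 ⟨y, hp, hq⟩, by simp [hm, hn]⟩

lemma reaches_append (A : PreAPFA V E Sym) {x z : V} {s t : List Sym} :
    A.Reaches x (s ++ t) z ↔ ∃ y, A.Reaches x s y ∧ A.Reaches y t z := by
  constructor
  · induction s generalizing x with
    | nil =>
      intro h
      exact ⟨x, A.reaches_refl x, h⟩
    | cons a s ih =>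
      rintro ⟨es, hp, hm⟩
      cases es with
      | nil => simp at hm
      | cons e es =>
        obtain ⟨he, hp⟩ := hp
        simp only [List.map_cons, List.cons_append, List.cons.injEq] at hm
        obtain ⟨ha, hm⟩ := hm
        obtain ⟨y, ⟨es₁, hp₁, hm₁⟩, h₂⟩ := ih ⟨es, hp, hm⟩
        exact ⟨y, ⟨e :: es₁, ⟨he, hp₁⟩, by simp [ha, hm₁]⟩, h₂⟩
  · rintro ⟨y, h1, h2⟩; exact A.reaches_trans h1 h2

lemma reaches_single (A : PreAPFA V E Sym) {x y : V} {a : Sym} :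
    A.Reaches x [a] y ↔ ∃ e, A.src e = x ∧ A.sym e = a ∧ A.tgt e = y := by
  constructor
  · rintro ⟨es, hp, hm⟩
    cases es with
    | nil => simp at hm
    | cons e es =>
      simp only [List.map_cons, List.cons.injEq] at hm
      obtain ⟨ha, hm⟩ := hm
      have : es = [] := List.map_eq_nil_iff.mp hm
      subst this
      exact ⟨e, hp.1, ha, hp.2⟩
  · rintro ⟨e, he, ha, ht⟩
    exact ⟨[e], ⟨he, ht⟩, by simp [ha]⟩

lemma reaches_snoc (A : PreAPFA V E Sym) {x z : V} {s : List Sym} {a : Sym} :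
    A.Reaches x (s ++ [a]) z ↔
      ∃ y e, A.Reaches x s y ∧ A.src e = y ∧ A.sym e = a ∧ A.tgt e = z := by
  rw [reaches_append]
  constructor
  · rintro ⟨y, h1, h2⟩
    obtain ⟨e, he, ha, ht⟩ := (A.reaches_single).1 h2
    exact ⟨y, e, h1, he, ha, ht⟩
  · rintro ⟨y, e, h1, he, ha, ht⟩
    exact ⟨y, h1, (A.reaches_single).2 ⟨e, he, ha, ht⟩⟩

lemma reaches_map {V' : Type*} {E' : Type*} (A : PreAPFA V E Sym) (B : PreAPFA V' E' Sym)
    (fV : V → V') (fE : E → E')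
    (hsrc : ∀ e, B.src (fE e) = fV (A.src e)) (htgt : ∀ e, B.tgt (fE e) = fV (A.tgt e))
    (hsym : ∀ e, B.sym (fE e) = A.sym e) :
    ∀ {x y : V} {s : List Sym}, A.Reaches x s y → B.Reaches (fV x) s (fV y) := by
  rintro x y s ⟨es, hp, hm⟩
  refine ⟨es.map fE, ?_, by simp [List.map_map, Function.comp_def, hsym, hm]⟩
  clear hm
  induction es generalizing x with
  | nil => simpa [IsPathFrom] using congrArg fV hp
  | cons e es ih =>
    obtain ⟨he, hp⟩ := hp
    exact ⟨by rw [hsrc, he], by rw [htgt]; exact ih hp⟩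

end PreAPFA

namespace APFA

variable {V : Type u} {E : Type v} {Sym : Type w} [Fintype V] [Fintype E]

lemma path_unique (G : APFA V E Sym) :
    ∀ {es fs : List E} {x y y' : V}, G.toPreAPFA.IsPathFrom x y es →
      G.toPreAPFA.IsPathFrom x y' fs → es.map G.toPreAPFA.sym = fs.map G.toPreAPFA.sym →
      es = fs ∧ y = y' := by
  intro es
  induction es with
  | nil =>
    intro fs x y y' hp hq hm
    cases fs with
    | nil => exact ⟨rfl, hp.symm.trans hq⟩
    | cons f fs => simp at hm
  | cons e es ih =>
    intro fs x y y' hp hq hm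
    cases fs with
    | nil => simp at hm
    | cons f fs =>
      simp only [List.map_cons, List.cons.injEq] at hm
      obtain ⟨he, hp⟩ := hp
      obtain ⟨hf, hq⟩ := hq
      have hef : e = f := G.sym_inj e f (he.trans hf.symm) hm.1
      subst hef
      obtain ⟨h1, h2⟩ := ih hp hq hm.2
      exact ⟨by rw [h1], h2⟩

lemma reaches_det (G : APFA V E Sym) {x y y' : V} {s : List Sym}
    (h1 : G.toPreAPFA.Reaches x s y) (h2 : G.toPreAPFA.Reaches x s y') : y = y' := by
  obtain ⟨es, hp, hm⟩ := h1
  obtain ⟨fs, hq, hn⟩ := h2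
  exact (G.path_unique hp hq (hm.trans hn.symm)).2

lemma level_unique (G : APFA V E Sym) {x : V} {i j : ℕ}
    (hi : G.toPreAPFA.HasLevel x i) (hj : G.toPreAPFA.HasLevel x j) : i = j := by
  obtain ⟨es, hp, rfl⟩ := hi
  obtain ⟨fs, hq, rfl⟩ := hj
  obtain ⟨_, gs, _, hx⟩ := G.connected x
  have h1 := G.const_len (es ++ gs) ((G.toPreAPFA.isPathFrom_append).2 ⟨x, hp, hx⟩)
  have h2 := G.const_len (fs ++ gs) ((G.toPreAPFA.isPathFrom_append).2 ⟨x, hq, hx⟩)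
  simp only [List.length_append] at h1 h2
  omega

lemma reaches_level (G : APFA V E Sym) {x : V} {s : List Sym}
    (h : G.toPreAPFA.Reaches G.toPreAPFA.root s x) : G.toPreAPFA.HasLevel x s.length := by
  obtain ⟨es, hp, hm⟩ := h
  exact ⟨es, hp, by rw [← hm, List.length_map]⟩

lemma level_le (G : APFA V E Sym) {x : V} {i : ℕ}
    (hi : G.toPreAPFA.HasLevel x i) : i ≤ G.p := by
  obtain ⟨es, hp, rfl⟩ := hi
  obtain ⟨_, gs, _, hx⟩ := G.connected x
  have h1 := G.const_len (es ++ gs) ((G.toPreAPFA.isPathFrom_append).2 ⟨x, hp, hx⟩)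
  simp only [List.length_append] at h1
  omega

lemma node_level (G : APFA V E Sym) (x : V) : ∃ ℓ, G.toPreAPFA.HasLevel x ℓ := by
  obtain ⟨es, _, hp, _⟩ := G.connected x
  exact ⟨es.length, es, hp, rfl⟩

lemma node_string (G : APFA V E Sym) (x : V) :
    ∃ s, G.toPreAPFA.Reaches G.toPreAPFA.root s x := by
  obtain ⟨es, _, hp, _⟩ := G.connected x
  exact ⟨es.map G.toPreAPFA.sym, es, hp, rfl⟩

lemma sink_level (G : APFA V E Sym) : G.toPreAPFA.HasLevel G.toPreAPFA.sink G.p := by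
  obtain ⟨es, _, hp, _⟩ := G.connected G.toPreAPFA.sink
  exact ⟨es, hp, G.const_len es hp⟩

lemma level_p_sink (G : APFA V E Sym) {x : V}
    (hx : G.toPreAPFA.HasLevel x G.p) : x = G.toPreAPFA.sink := by
  obtain ⟨es, hp, hlen⟩ := hx
  obtain ⟨_, gs, _, hxs⟩ := G.connected x
  have h1 := G.const_len (es ++ gs) ((G.toPreAPFA.isPathFrom_append).2 ⟨x, hp, hxs⟩)
  simp only [List.length_append] at h1
  have : gs = [] := List.eq_nil_of_length_eq_zero (by omega)
  subst this
  exact hxs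

lemma edge_level_lt (G : APFA V E Sym) {e : E} {ℓ : ℕ}
    (h : G.toPreAPFA.HasLevel (G.toPreAPFA.src e) ℓ) : ℓ < G.p := by
  obtain ⟨es, hp, hlen⟩ := h
  obtain ⟨_, gs, _, hxs⟩ := G.connected (G.toPreAPFA.tgt e)
  have h1 := G.const_len ((es ++ [e]) ++ gs) ((G.toPreAPFA.isPathFrom_append).2
    ⟨G.toPreAPFA.tgt e, (G.toPreAPFA.isPathFrom_append).2
      ⟨G.toPreAPFA.src e, hp, ⟨rfl, rfl⟩⟩, hxs⟩)
  simp only [List.length_append, List.length_cons, List.length_nil] at h1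
  omega

lemma sym_mem_symsAt (G : APFA V E Sym) {e : E} {ℓ : ℕ}
    (h : G.toPreAPFA.HasLevel (G.toPreAPFA.src e) ℓ) :
    G.toPreAPFA.sym e ∈ G.toAPFAGraph.symsAt ℓ := ⟨e, h, rfl⟩

lemma hasLevel_extend (G : APFA V E Sym) {x y : V} {t : List Sym} {ℓ : ℕ}
    (hx : G.toPreAPFA.HasLevel x ℓ) (h : G.toPreAPFA.Reaches x t y) :
    G.toPreAPFA.HasLevel y (ℓ + t.length) := by
  obtain ⟨es, hp, hlen⟩ := hx
  obtain ⟨fs, hq, hm⟩ := h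
  exact ⟨es ++ fs, (G.toPreAPFA.isPathFrom_append).2 ⟨x, hp, hq⟩,
    by simp [hlen, ← hm]⟩

/-- In a complete APFA, any string realizable from one level-`ℓ` node is realizable
from any other level-`ℓ` node. -/
lemma reaches_transfer (G : APFA V E Sym) (hC : G.toAPFAGraph.Complete) :
    ∀ (t : List Sym) (x x' y : V) (ℓ : ℕ), G.toPreAPFA.HasLevel x ℓ →
      G.toPreAPFA.HasLevel x' ℓ → G.toPreAPFA.Reaches x t y →
      ∃ y', G.toPreAPFA.Reaches x' t y' := by
  intro t
  induction t with
  | nil => exact fun x x' y ℓ _ _ _ => ⟨x', G.toPreAPFA.reaches_refl x'⟩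
  | cons a t ih =>
    intro x x' y ℓ hx hx' hr
    rw [show a :: t = [a] ++ t from rfl, PreAPFA.reaches_append] at hr
    obtain ⟨m, h1, h2⟩ := hr
    obtain ⟨e, he, ha, ht⟩ := (G.toPreAPFA.reaches_single).1 h1
    have hmem : a ∈ G.toAPFAGraph.symsAt ℓ := ha ▸ G.sym_mem_symsAt (he ▸ hx)
    have hlt : ℓ < G.p := G.edge_level_lt (e := e) (he ▸ hx)
    obtain ⟨e', he', ha'⟩ := hC x' ℓ hx' hlt a hmem
    have hlx : G.toPreAPFA.HasLevel (G.toPreAPFA.tgt e) (ℓ + 1) := by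
      have := G.hasLevel_extend hx ((G.toPreAPFA.reaches_single).2 ⟨e, he, ha, rfl⟩)
      simpa using this
    have hlx' : G.toPreAPFA.HasLevel (G.toPreAPFA.tgt e') (ℓ + 1) := by
      have := G.hasLevel_extend hx' ((G.toPreAPFA.reaches_single).2 ⟨e', he', ha', rfl⟩)
      simpa using this
    obtain ⟨y', hy'⟩ := ih (G.toPreAPFA.tgt e) (G.toPreAPFA.tgt e') y (ℓ + 1) hlx hlx'
      (ht ▸ h2)
    refine ⟨y', ?_⟩
    rw [show a :: t = [a] ++ t from rfl, PreAPFA.reaches_append]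
    exact ⟨G.toPreAPFA.tgt e', (G.toPreAPFA.reaches_single).2 ⟨e', he', ha', rfl⟩, hy'⟩

end APFA

end Infra


section CompletionLemmas

variable {V : Type u} {E : Type v} {V' : Type u} {E' : Type v} {Sym : Type w}
  [Fintype V] [Fintype E] [Fintype V'] [Fintype E']

lemma APFA.hasLevel_iff_reaches (G : APFA V E Sym) {x : V} {i : ℕ} :
    G.toPreAPFA.HasLevel x i ↔ ∃ s : List Sym,
      G.toPreAPFA.Reaches G.toPreAPFA.root s x ∧ s.length = i := by
  constructor
  · rintro ⟨es, hp, rfl⟩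
    exact ⟨es.map G.toPreAPFA.sym, ⟨es, hp, rfl⟩, by simp⟩
  · rintro ⟨s, h, rfl⟩
    exact G.reaches_level h

/-- Mapping levels along a graph homomorphism preserving root. -/
lemma map_hasLevel {G : APFA V E Sym} {G' : APFA V' E' Sym} {fV : V → V'} {fE : E → E'}
    (hsrc : ∀ e, G'.toPreAPFA.src (fE e) = fV (G.toPreAPFA.src e))
    (htgt : ∀ e, G'.toPreAPFA.tgt (fE e) = fV (G.toPreAPFA.tgt e))
    (hsym : ∀ e, G'.toPreAPFA.sym (fE e) = G.toPreAPFA.sym e)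
    (hroot : fV G.toPreAPFA.root = G'.toPreAPFA.root)
    {x : V} {i : ℕ} (h : G.toPreAPFA.HasLevel x i) :
    G'.toPreAPFA.HasLevel (fV x) i := by
  rw [APFA.hasLevel_iff_reaches] at h ⊢
  obtain ⟨s, hr, hlen⟩ := h
  refine ⟨s, ?_, hlen⟩
  have := PreAPFA.reaches_map G.toPreAPFA G'.toPreAPFA fV fE hsrc htgt hsym hr
  rwa [hroot] at this

section CompOf
variable {G : APFA V E Sym} {G' : APFA V' E' Sym} {ιV : V → V'} {ιE : E → E'}

lemma IsCompletionOf.reaches (hc : IsCompletionOf G G' ιV ιE) {x : V} {s : List Sym}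
    (h : G.toPreAPFA.Reaches G.toPreAPFA.root s x) :
    G'.toPreAPFA.Reaches G'.toPreAPFA.root s (ιV x) := by
  have := PreAPFA.reaches_map G.toPreAPFA G'.toPreAPFA ιV ιE hc.src_comm hc.tgt_comm
    hc.sym_comm h
  rwa [hc.root_comm] at this

lemma IsCompletionOf.hasLevel (hc : IsCompletionOf G G' ιV ιE) {x : V} {i : ℕ}
    (h : G.toPreAPFA.HasLevel x i) : G'.toPreAPFA.HasLevel (ιV x) i :=
  map_hasLevel hc.src_comm hc.tgt_comm hc.sym_comm hc.root_comm h

/-- A string not realizable in `G` but realizable in `G'` (of length `< p`)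
ends at a new node. -/
lemma IsCompletionOf.new_of_not_lang (hc : IsCompletionOf G G' ιV ιE) :
    ∀ (s : List Sym) (x' : V'), G'.toPreAPFA.Reaches G'.toPreAPFA.root s x' →
      (¬ ∃ x, G.toPreAPFA.Reaches G.toPreAPFA.root s x) → s.length < G.p →
      x' ∉ Set.range ιV := by
  intro s
  induction s using List.reverseRecOn with
  | nil =>
    intro x' _ hn _
    exact absurd ⟨G.toPreAPFA.root, G.toPreAPFA.reaches_refl _⟩ hn
  | append_singleton s a ih =>
    intro x' hr hn hlen
    obtain ⟨m', e', hm', hsrc, hsym, htgt⟩ := (G'.toPreAPFA.reaches_snoc).1 hr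
    have hlen' : s.length < G.p := by
      simp only [List.length_append, List.length_cons, List.length_nil] at hlen; omega
    have hnew : e' ∉ Set.range ιE := by
      rintro ⟨f, rfl⟩
      by_cases hs : ∃ x, G.toPreAPFA.Reaches G.toPreAPFA.root s x
      · obtain ⟨x, hx⟩ := hs
        have hmx : m' = ιV x := G'.reaches_det hm' (hc.reaches hx)
        have : G.toPreAPFA.src f = x := hc.injV (by rw [← hc.src_comm, hsrc, hmx])
        exact hn ⟨G.toPreAPFA.tgt f, (G.toPreAPFA.reaches_snoc).2
          ⟨x, f, hx, this, by rw [← hc.sym_comm]; exact hsym, rfl⟩⟩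
      · exact ih m' hm' hs hlen' ⟨G.toPreAPFA.src f, by rw [← hc.src_comm f, hsrc]⟩
    intro hran
    have hsink : x' = G'.toPreAPFA.sink := htgt ▸ hc.new_edge_tgt e' hnew (htgt ▸ hran)
    have h1 : G'.toPreAPFA.HasLevel x' (s.length + 1) := by
      have := G'.reaches_level hr; simpa using this
    have h2 : G'.toPreAPFA.HasLevel x' G'.p := hsink ▸ G'.sink_level
    have := G'.level_unique h1 h2
    rw [hc.p_eq] at this
    simp only [List.length_append, List.length_cons, List.length_nil] at hlen
    omega

/-- Key structural lemma for completions: two strings reaching the same node of `G'`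
at level `< p` have a common suffix over a common `G`-prefix-node. -/
lemma IsCompletionOf.split (hc : IsCompletionOf G G' ιV ιE) :
    ∀ (n : ℕ) (s t : List Sym) (x' : V'), s.length = n →
      G'.toPreAPFA.Reaches G'.toPreAPFA.root s x' →
      G'.toPreAPFA.Reaches G'.toPreAPFA.root t x' → s.length < G.p →
      ∃ s₀ t₀ u m, s = s₀ ++ u ∧ t = t₀ ++ u ∧
        G.toPreAPFA.Reaches G.toPreAPFA.root s₀ m ∧
        G.toPreAPFA.Reaches G.toPreAPFA.root t₀ m := by
  intro n
  induction n using Nat.strong_induction_on with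
  | _ n ih =>
    intro s t x' hsn hs ht hlen
    have hlev : t.length = s.length :=
      G'.level_unique (G'.reaches_level ht) (G'.reaches_level hs)
    by_cases hgs : ∃ x, G.toPreAPFA.Reaches G.toPreAPFA.root s x
    · obtain ⟨x, hx⟩ := hgs
      by_cases hgt : ∃ y, G.toPreAPFA.Reaches G.toPreAPFA.root t y
      · obtain ⟨y, hy⟩ := hgt
        have hxy : x = y := hc.injV <| by
          have h1 : x' = ιV x := G'.reaches_det hs (hc.reaches hx)
          have h2 : x' = ιV y := G'.reaches_det ht (hc.reaches hy)
          rw [← h1, ← h2]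
        exact ⟨s, t, [], x, by simp, by simp, hx, hxy ▸ hy⟩
      · exfalso
        apply hc.new_of_not_lang t x' ht hgt (hlev ▸ hlen)
        exact ⟨x, (G'.reaches_det hs (hc.reaches hx)).symm⟩
    · by_cases hgt : ∃ y, G.toPreAPFA.Reaches G.toPreAPFA.root t y
      · obtain ⟨y, hy⟩ := hgt
        exfalso
        apply hc.new_of_not_lang s x' hs hgs hlen
        exact ⟨y, (G'.reaches_det ht (hc.reaches hy)).symm⟩
      · -- both new
        have hxnew : x' ∉ Set.range ιV := hc.new_of_not_lang s x' hs hgs hlen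
        rcases s.eq_nil_or_concat with rfl | ⟨s', a, rfl⟩
        · exact absurd ⟨G.toPreAPFA.root, G.toPreAPFA.reaches_refl _⟩ hgs
        rcases t.eq_nil_or_concat with rfl | ⟨t', b, rfl⟩
        · exact absurd ⟨G.toPreAPFA.root, G.toPreAPFA.reaches_refl _⟩ hgt
        simp only [List.concat_eq_append] at hs ht hsn hlen ⊢
        obtain ⟨m₁, e, hm₁, hsrce, hsyme, htgte⟩ := (G'.toPreAPFA.reaches_snoc).1 hs
        obtain ⟨m₂, f, hm₂, hsrcf, hsymf, htgtf⟩ := (G'.toPreAPFA.reaches_snoc).1 ht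
        obtain ⟨e₀, -, huniq⟩ := hc.new_node_unique_in x' hxnew
        have hef : e = f := (huniq e htgte).trans (huniq f htgtf).symm
        subst hef
        have hab : a = b := hsyme.symm.trans hsymf
        subst hab
        have hm12 : m₁ = m₂ := hsrce.symm.trans hsrcf
        subst hm12
        have hslen : s'.length < n := by simp at hsn; omega
        obtain ⟨s₀, t₀, u, m, hs₀, ht₀, hrs, hrt⟩ := ih s'.length hslen s' t' m₁ rfl hm₁ hm₂
          (by simp at hlen; omega)
        exact ⟨s₀, t₀, u ++ [a], m, by rw [hs₀, List.append_assoc],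
          by rw [ht₀, List.append_assoc], hrs, hrt⟩

end CompOf

/-- Two complete APFAs with the same symbol sets and the same `p` have the same language. -/
lemma lang_transfer {G : APFA V E Sym} {H : APFA V' E' Sym} (hH : H.toAPFAGraph.Complete)
    (hsym : ∀ i, G.toAPFAGraph.symsAt i = H.toAPFAGraph.symsAt i) (hp : G.p = H.p) :
    ∀ (s : List Sym), (∃ x, G.toPreAPFA.Reaches G.toPreAPFA.root s x) →
      ∃ y, H.toPreAPFA.Reaches H.toPreAPFA.root s y := by
  intro s
  induction s using List.reverseRecOn with
  | nil => exact fun _ => ⟨H.toPreAPFA.root, H.toPreAPFA.reaches_refl _⟩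
  | append_singleton s a ih =>
    rintro ⟨x, hx⟩
    obtain ⟨m, e, hm, hsrc, hsyme, htgt⟩ := (G.toPreAPFA.reaches_snoc).1 hx
    obtain ⟨y, hy⟩ := ih ⟨m, hm⟩
    have hmem : a ∈ H.toAPFAGraph.symsAt s.length := by
      rw [← hsym]
      exact hsyme ▸ G.sym_mem_symsAt (hsrc ▸ G.reaches_level hm)
    have hylev : H.toPreAPFA.HasLevel y s.length := H.reaches_level hy
    have hlt : s.length < H.p := hp ▸ G.edge_level_lt (e := e) (hsrc ▸ G.reaches_level hm)
    obtain ⟨e', hsrc', hsym'⟩ := hH y s.length hylev hlt a hmem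
    exact ⟨H.toPreAPFA.tgt e', (H.toPreAPFA.reaches_snoc).2 ⟨y, e', hy, hsrc', hsym', rfl⟩⟩

/-- Merging preserves the symbol sets `X_i`. -/
lemma IsMergeOf.symsAt_eq {A : APFA V E Sym} {D : APFA V' E' Sym} {st : Set V}
    {ψV : V → V'} {ψE : E → E'} (hm : IsMergeOf A st D ψV ψE) :
    ∀ i, D.toAPFAGraph.symsAt i = A.toAPFAGraph.symsAt i := by
  intro i
  ext σ
  constructor
  · rintro ⟨e₃, hlev, rfl⟩
    obtain ⟨f, rfl⟩ := hm.surjE e₃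
    obtain ⟨j, hj⟩ := A.node_level (A.toPreAPFA.src f)
    have hj' : D.toPreAPFA.HasLevel (D.toPreAPFA.src (ψE f)) j := by
      rw [hm.src_comm]
      exact map_hasLevel hm.src_comm hm.tgt_comm hm.sym_comm hm.root_comm hj
    have : i = j := D.level_unique hlev hj'
    subst this
    exact ⟨f, hj, (hm.sym_comm f).symm⟩
  · rintro ⟨f, hlev, hsy⟩
    refine ⟨ψE f, ?_, (hm.sym_comm f).trans hsy⟩
    rw [hm.src_comm]
    exact map_hasLevel hm.src_comm hm.tgt_comm hm.sym_comm hm.root_comm hlev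

lemma IsMergeOf.reaches {A : APFA V E Sym} {D : APFA V' E' Sym} {st : Set V}
    {ψV : V → V'} {ψE : E → E'} (hm : IsMergeOf A st D ψV ψE) {x : V} {s : List Sym}
    (h : A.toPreAPFA.Reaches A.toPreAPFA.root s x) :
    D.toPreAPFA.Reaches D.toPreAPFA.root s (ψV x) := by
  have := PreAPFA.reaches_map A.toPreAPFA D.toPreAPFA ψV ψE hm.src_comm hm.tgt_comm
    hm.sym_comm h
  rwa [hm.root_comm] at this

end CompletionLemmas


section MainLemmas

variable {V : Type u} {E : Type v} {V₁ : Type u} {E₁ : Type v}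
  {V₃ : Type u} {E₃ : Type v} {V₄ : Type u} {E₄ : Type v} {Sym : Type w}
  [Fintype V] [Fintype E] [Fintype V₁] [Fintype E₁]
  [Fintype V₃] [Fintype E₃] [Fintype V₄] [Fintype E₄]

/-- The string-level relation generated by merging `v` and `w`, relativized to the
language of the completion `B`. -/
def SRel (A : APFA V E Sym) (B : APFA V₁ E₁ Sym) (v w : V) (s t : List Sym) : Prop :=
  (∃ x₁, B.toPreAPFA.Reaches B.toPreAPFA.root s x₁) ∧
  (∃ y₁, B.toPreAPFA.Reaches B.toPreAPFA.root t y₁) ∧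
  ((s.length = A.p ∧ t.length = A.p) ∨
    ∃ s₀ t₀ u, s = s₀ ++ u ∧ t = t₀ ++ u ∧
      ((∃ m, A.toPreAPFA.Reaches A.toPreAPFA.root s₀ m ∧
          A.toPreAPFA.Reaches A.toPreAPFA.root t₀ m) ∨
       (A.toPreAPFA.Reaches A.toPreAPFA.root s₀ v ∧
          A.toPreAPFA.Reaches A.toPreAPFA.root t₀ w)))

/-- `SEq` : the equivalence closure of `SRel`. -/
abbrev SEq (A : APFA V E Sym) (B : APFA V₁ E₁ Sym) (v w : V) : List Sym → List Sym → Prop :=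
  Relation.EqvGen (SRel A B v w)

section WithData

variable {A : APFA V E Sym} {B : APFA V₁ E₁ Sym} {v w : V} {i : ℕ}
  {ιV : V → V₁} {ιE : E → E₁}

/-- `SEq`-related strings are equal or both realizable in `B` with the same length. -/
lemma seq_pres (hv : A.toPreAPFA.HasLevel v i) (hw : A.toPreAPFA.HasLevel w i)
    {s t : List Sym} (h : SEq A B v w s t) :
    s = t ∨ ((∃ x₁, B.toPreAPFA.Reaches B.toPreAPFA.root s x₁) ∧
      (∃ y₁, B.toPreAPFA.Reaches B.toPreAPFA.root t y₁) ∧ s.length = t.length) := by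
  induction h with
  | rel s t hst =>
    obtain ⟨hs, ht, hcase⟩ := hst
    refine Or.inr ⟨hs, ht, ?_⟩
    rcases hcase with ⟨h1, h2⟩ | ⟨s₀, t₀, u, rfl, rfl, hc⟩
    · omega
    · have : s₀.length = t₀.length := by
        rcases hc with ⟨m, h1, h2⟩ | ⟨h1, h2⟩
        · exact A.level_unique (A.reaches_level h1) (A.reaches_level h2)
        · have e1 : s₀.length = i := A.level_unique (A.reaches_level h1) hv
          have e2 : t₀.length = i := A.level_unique (A.reaches_level h2) hw
          omega
      simp [this]
  | refl s => exact Or.inl rfl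
  | symm s t h ih =>
    rcases ih with rfl | ⟨h1, h2, h3⟩
    · exact Or.inl rfl
    · exact Or.inr ⟨h2, h1, h3.symm⟩
  | trans s r t h1 h2 ih1 ih2 =>
    rcases ih1 with rfl | ⟨hs, hr, hsr⟩
    · exact ih2
    · rcases ih2 with rfl | ⟨hr', ht, hrt⟩
      · exact Or.inr ⟨hs, hr, hsr⟩
      · exact Or.inr ⟨hs, ht, hsr.trans hrt⟩

/-- Realizability of an extension transfers along same-level nodes (needs completeness). -/
lemma lb_ext (hcB : B.toAPFAGraph.Complete) {s t : List Sym} {u : List Sym}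
    (hslen : s.length = t.length)
    (hs : ∃ x₁, B.toPreAPFA.Reaches B.toPreAPFA.root s x₁)
    (ht : ∃ y₁, B.toPreAPFA.Reaches B.toPreAPFA.root t y₁)
    (hsu : ∃ z, B.toPreAPFA.Reaches B.toPreAPFA.root (s ++ u) z) :
    ∃ z', B.toPreAPFA.Reaches B.toPreAPFA.root (t ++ u) z' := by
  obtain ⟨z, hz⟩ := hsu
  obtain ⟨y, hy⟩ := ht
  rw [PreAPFA.reaches_append] at hz
  obtain ⟨x, hx, hxu⟩ := hz
  obtain ⟨z', hz'⟩ := B.reaches_transfer hcB u x y z s.length (B.reaches_level hx)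
    (hslen ▸ B.reaches_level hy) hxu
  exact ⟨z', B.toPreAPFA.reaches_trans hy hz'⟩

/-- `SEq` is stable under appending a common (realizable) suffix. -/
lemma SEq.ext (hv : A.toPreAPFA.HasLevel v i) (hw : A.toPreAPFA.HasLevel w i)
    (hcB : B.toAPFAGraph.Complete) (hpB : B.p = A.p) {s t : List Sym} (h : SEq A B v w s t)
    (u : List Sym) (hsu : ∃ z, B.toPreAPFA.Reaches B.toPreAPFA.root (s ++ u) z) :
    SEq A B v w (s ++ u) (t ++ u) := by
  induction h generalizing u with
  | rel s t hst =>
    obtain ⟨hs, ht, hcase⟩ := hst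
    have hlen : s.length = t.length := by
      rcases seq_pres hv hw (Relation.EqvGen.rel s t ⟨hs, ht, hcase⟩ : SEq A B v w s t) with
        rfl | ⟨_, _, h3⟩
      · rfl
      · exact h3
    have htu : ∃ z', B.toPreAPFA.Reaches B.toPreAPFA.root (t ++ u) z' :=
      lb_ext hcB hlen hs ht hsu
    rcases hcase with ⟨h1, h2⟩ | ⟨s₀, t₀, u₀, rfl, rfl, hc⟩
    · -- length p: the suffix must be empty
      have hu : u = [] := by
        obtain ⟨z, hz⟩ := hsu
        have := B.level_le (B.reaches_level hz)
        rw [hpB] at this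
        simp only [List.length_append] at this
        exact List.eq_nil_of_length_eq_zero (by omega)
      subst hu
      simp only [List.append_nil]
      exact Relation.EqvGen.rel s t ⟨hs, ht, Or.inl ⟨h1, h2⟩⟩
    · refine Relation.EqvGen.rel _ _ ⟨hsu, htu, Or.inr ⟨s₀, t₀, u₀ ++ u, ?_, ?_, hc⟩⟩
      · rw [List.append_assoc]
      · rw [List.append_assoc]
  | refl s => exact Relation.EqvGen.refl _
  | symm s t h ih =>
    rcases seq_pres hv hw (h : SEq A B v w s t) with rfl | ⟨hs, ht, hlen⟩
    · exact Relation.EqvGen.refl _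
    · exact Relation.EqvGen.symm _ _ (ih u (lb_ext hcB hlen.symm ht hs hsu))
  | trans s r t h1 h2 ih1 ih2 =>
    rcases seq_pres hv hw (h1 : SEq A B v w s r) with rfl | ⟨hs, hr, hlen⟩
    · exact ih2 u hsu
    · have hru : ∃ z', B.toPreAPFA.Reaches B.toPreAPFA.root (r ++ u) z' :=
        lb_ext hcB hlen hs hr hsu
      exact Relation.EqvGen.trans _ _ _ (ih1 u hsu) (ih2 u hru)

/-- Two strings reaching the same node of `B` are `SEq`-related. -/
lemma breach_seq (hcompl : IsCompletionOf A B ιV ιE) {s t : List Sym} {x₁ : V₁}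
    (hs : B.toPreAPFA.Reaches B.toPreAPFA.root s x₁)
    (ht : B.toPreAPFA.Reaches B.toPreAPFA.root t x₁) : SEq A B v w s t := by
  have hlen : t.length = s.length :=
    B.level_unique (B.reaches_level ht) (B.reaches_level hs)
  by_cases hp : s.length = A.p
  · exact Relation.EqvGen.rel _ _ ⟨⟨x₁, hs⟩, ⟨x₁, ht⟩, Or.inl ⟨hp, hlen.trans hp⟩⟩
  · have hlt : s.length < A.p := by
      have := B.level_le (B.reaches_level hs)
      rw [hcompl.p_eq] at this
      omega
    obtain ⟨s₀, t₀, u, m, hs₀, ht₀, hrs, hrt⟩ := hcompl.split s.length s t x₁ rfl hs ht hlt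
    rw [hs₀, ht₀]
    exact Relation.EqvGen.rel _ _ ⟨⟨x₁, hs₀ ▸ hs⟩, ⟨x₁, ht₀ ▸ ht⟩,
      Or.inr ⟨s₀, t₀, u, rfl, rfl, Or.inl ⟨m, hrs, hrt⟩⟩⟩

/-- Strings into the two merged states (or a common state), extended by a common suffix,
are `SEq`-related. -/
lemma pair_seq (hcompl : IsCompletionOf A B ιV ιE) {v' w' : V}
    (hv' : v' ∈ ({v, w} : Set V)) (hw' : w' ∈ ({v, w} : Set V)) {s₁ s₂ u : List Sym}
    (h1 : A.toPreAPFA.Reaches A.toPreAPFA.root s₁ v')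
    (h2 : A.toPreAPFA.Reaches A.toPreAPFA.root s₂ w')
    (hm1 : ∃ z, B.toPreAPFA.Reaches B.toPreAPFA.root (s₁ ++ u) z)
    (hm2 : ∃ z, B.toPreAPFA.Reaches B.toPreAPFA.root (s₂ ++ u) z) :
    SEq A B v w (s₁ ++ u) (s₂ ++ u) := by
  simp only [Set.mem_insert_iff, Set.mem_singleton_iff] at hv' hw'
  rcases hv' with rfl | rfl <;> rcases hw' with rfl | rfl
  · exact Relation.EqvGen.rel _ _ ⟨hm1, hm2, Or.inr ⟨s₁, s₂, u, rfl, rfl, Or.inl ⟨_, h1, h2⟩⟩⟩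
  · exact Relation.EqvGen.rel _ _ ⟨hm1, hm2, Or.inr ⟨s₁, s₂, u, rfl, rfl, Or.inr ⟨h1, h2⟩⟩⟩
  · exact Relation.EqvGen.symm _ _
      (Relation.EqvGen.rel _ _ ⟨hm2, hm1, Or.inr ⟨s₂, s₁, u, rfl, rfl, Or.inr ⟨h2, h1⟩⟩⟩)
  · exact Relation.EqvGen.rel _ _ ⟨hm1, hm2, Or.inr ⟨s₁, s₂, u, rfl, rfl, Or.inl ⟨_, h1, h2⟩⟩⟩

/-- Moving strings across the `A`-merging relation. -/
lemma merge_string_move (hcompl : IsCompletionOf A B ιV ιE)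
    (hv : A.toPreAPFA.HasLevel v i) (hw : A.toPreAPFA.HasLevel w i) {x y : V}
    (h : Relation.EqvGen (A.toPreAPFA.mergeRelV {v, w}) x y) :
    (∀ r, A.toPreAPFA.Reaches A.toPreAPFA.root r y →
      ∃ r', A.toPreAPFA.Reaches A.toPreAPFA.root r' x ∧ SEq A B v w r' r) ∧
    (∀ r, A.toPreAPFA.Reaches A.toPreAPFA.root r x →
      ∃ r', A.toPreAPFA.Reaches A.toPreAPFA.root r' y ∧ SEq A B v w r' r) := by
  induction h with
  | rel x y hxy =>
    obtain ⟨v', hv', w', hw', es, fs, hpx, hpy, hsyms⟩ := hxy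
    obtain ⟨sv, hsv⟩ := A.node_string v'
    obtain ⟨sw, hsw⟩ := A.node_string w'
    constructor
    · intro r hr
      refine ⟨sv ++ es.map A.toPreAPFA.sym,
        A.toPreAPFA.reaches_trans hsv ⟨es, hpx, rfl⟩, ?_⟩
      have hm1 : ∃ z, B.toPreAPFA.Reaches B.toPreAPFA.root
          (sv ++ es.map A.toPreAPFA.sym) z :=
        ⟨ιV x, hcompl.reaches (A.toPreAPFA.reaches_trans hsv ⟨es, hpx, rfl⟩)⟩
      have hm2 : ∃ z, B.toPreAPFA.Reaches B.toPreAPFA.root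
          (sw ++ es.map A.toPreAPFA.sym) z := by
        rw [hsyms]
        exact ⟨ιV y, hcompl.reaches (A.toPreAPFA.reaches_trans hsw ⟨fs, hpy, rfl⟩)⟩
      have hmid : SEq A B v w (sv ++ es.map A.toPreAPFA.sym)
          (sw ++ es.map A.toPreAPFA.sym) := pair_seq hcompl hv' hw' hsv hsw hm1 hm2
      have hlast : SEq A B v w (sw ++ es.map A.toPreAPFA.sym) r := by
        refine Relation.EqvGen.rel _ _ ⟨hm2, ⟨ιV y, hcompl.reaches hr⟩,
          Or.inr ⟨sw ++ es.map A.toPreAPFA.sym, r, [], by simp, by simp,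
            Or.inl ⟨y, ?_, hr⟩⟩⟩
        rw [hsyms]
        exact A.toPreAPFA.reaches_trans hsw ⟨fs, hpy, rfl⟩
      exact Relation.EqvGen.trans _ _ _ hmid hlast
    · intro r hr
      refine ⟨sw ++ fs.map A.toPreAPFA.sym,
        A.toPreAPFA.reaches_trans hsw ⟨fs, hpy, rfl⟩, ?_⟩
      have hm2 : ∃ z, B.toPreAPFA.Reaches B.toPreAPFA.root
          (sw ++ fs.map A.toPreAPFA.sym) z :=
        ⟨ιV y, hcompl.reaches (A.toPreAPFA.reaches_trans hsw ⟨fs, hpy, rfl⟩)⟩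
      have hm1 : ∃ z, B.toPreAPFA.Reaches B.toPreAPFA.root
          (sv ++ fs.map A.toPreAPFA.sym) z := by
        rw [← hsyms]
        exact ⟨ιV x, hcompl.reaches (A.toPreAPFA.reaches_trans hsv ⟨es, hpx, rfl⟩)⟩
      have hmid : SEq A B v w (sw ++ fs.map A.toPreAPFA.sym)
          (sv ++ fs.map A.toPreAPFA.sym) := pair_seq hcompl hw' hv' hsw hsv hm2 hm1
      have hlast : SEq A B v w (sv ++ fs.map A.toPreAPFA.sym) r := by
        refine Relation.EqvGen.rel _ _ ⟨hm1, ⟨ιV x, hcompl.reaches hr⟩,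
          Or.inr ⟨sv ++ fs.map A.toPreAPFA.sym, r, [], by simp, by simp,
            Or.inl ⟨x, ?_, hr⟩⟩⟩
        rw [← hsyms]
        exact A.toPreAPFA.reaches_trans hsv ⟨es, hpx, rfl⟩
      exact Relation.EqvGen.trans _ _ _ hmid hlast
  | refl x =>
    exact ⟨fun r hr => ⟨r, hr, Relation.EqvGen.refl r⟩,
      fun r hr => ⟨r, hr, Relation.EqvGen.refl r⟩⟩
  | symm x y h ih => exact ⟨ih.2, ih.1⟩
  | trans x y z h1 h2 ih1 ih2 =>
    constructor
    · intro r hr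
      obtain ⟨r', hr', hseq'⟩ := ih2.1 r hr
      obtain ⟨r'', hr'', hseq''⟩ := ih1.1 r' hr'
      exact ⟨r'', hr'', Relation.EqvGen.trans _ _ _ hseq'' hseq'⟩
    · intro r hr
      obtain ⟨r', hr', hseq'⟩ := ih1.2 r hr
      obtain ⟨r'', hr'', hseq''⟩ := ih2.2 r' hr'
      exact ⟨r'', hr'', Relation.EqvGen.trans _ _ _ hseq'' hseq'⟩

variable {D : APFA V₃ E₃ Sym} {ψV : V → V₃} {ψE : E → E₃}
  {D' : APFA V₄ E₄ Sym} {κV : V₃ → V₄} {κE : E₃ → E₄}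

/-- Every string realizable in the merge `D` is `SEq`-equivalent to a string realizable
in `A` reaching a `ψV`-preimage. -/
lemma straighten (hcompl : IsCompletionOf A B ιV ιE) (hv : A.toPreAPFA.HasLevel v i)
    (hw : A.toPreAPFA.HasLevel w i) (hmergeA : IsMergeOf A {v, w} D ψV ψE) :
    ∀ (s : List Sym) (y₃ : V₃), D.toPreAPFA.Reaches D.toPreAPFA.root s y₃ →
      ∃ sh x, A.toPreAPFA.Reaches A.toPreAPFA.root sh x ∧ ψV x = y₃ ∧ SEq A B v w sh s := by
  intro s
  induction s using List.reverseRecOn with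
  | nil =>
    intro y₃ hr
    rw [PreAPFA.reaches_nil] at hr
    exact ⟨[], A.toPreAPFA.root, A.toPreAPFA.reaches_refl _,
      hmergeA.root_comm.trans hr, Relation.EqvGen.refl _⟩
  | append_singleton s a ih =>
    intro y₃ hr
    obtain ⟨m₃, e₃, hm₃, hsrc, hsym, htgt⟩ := (D.toPreAPFA.reaches_snoc).1 hr
    obtain ⟨f, rfl⟩ := hmergeA.surjE e₃
    obtain ⟨sh, x, hx, hψx, hseq⟩ := ih m₃ hm₃
    have heq : Relation.EqvGen (A.toPreAPFA.mergeRelV {v, w}) (A.toPreAPFA.src f) x :=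
      (hmergeA.eqV _ _).1 (by rw [← hmergeA.src_comm, hsrc, hψx])
    obtain ⟨r', hr', hseq'⟩ := (merge_string_move hcompl hv hw heq).1 sh hx
    have hsymf : A.toPreAPFA.sym f = a := by rw [← hmergeA.sym_comm]; exact hsym
    have hreach : A.toPreAPFA.Reaches A.toPreAPFA.root (r' ++ [a]) (A.toPreAPFA.tgt f) :=
      (A.toPreAPFA.reaches_snoc).2 ⟨_, f, hr', rfl, hsymf, rfl⟩
    refine ⟨r' ++ [a], A.toPreAPFA.tgt f, hreach, ?_, ?_⟩
    · rw [← htgt, hmergeA.tgt_comm]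
    · have hmem : ∃ z, B.toPreAPFA.Reaches B.toPreAPFA.root (r' ++ [a]) z :=
        ⟨ιV (A.toPreAPFA.tgt f), hcompl.reaches hreach⟩
      have h1 : SEq A B v w (r' ++ [a]) (sh ++ [a]) :=
        SEq.ext hv hw hcompl.complete hcompl.p_eq hseq' [a] hmem
      have hmem2 : ∃ z, B.toPreAPFA.Reaches B.toPreAPFA.root (sh ++ [a]) z := by
        rcases seq_pres hv hw h1 with heq2 | ⟨_, h2, _⟩
        · rw [← heq2]; exact hmem
        · exact h2
      exact Relation.EqvGen.trans _ _ _ h1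
        (SEq.ext hv hw hcompl.complete hcompl.p_eq hseq [a] hmem2)

/-- Two strings reaching the same node of the merge `D` are `SEq`-related. -/
lemma merge_eq_seq (hcompl : IsCompletionOf A B ιV ιE) (hv : A.toPreAPFA.HasLevel v i)
    (hw : A.toPreAPFA.HasLevel w i) (hmergeA : IsMergeOf A {v, w} D ψV ψE)
    {s t : List Sym} {y₃ : V₃}
    (hs : D.toPreAPFA.Reaches D.toPreAPFA.root s y₃)
    (ht : D.toPreAPFA.Reaches D.toPreAPFA.root t y₃) : SEq A B v w s t := by
  obtain ⟨sh, x, hx, hψx, hseq⟩ := straighten hcompl hv hw hmergeA s y₃ hs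
  obtain ⟨th, x', hx', hψx', hseq'⟩ := straighten hcompl hv hw hmergeA t y₃ ht
  have heq : Relation.EqvGen (A.toPreAPFA.mergeRelV {v, w}) x x' :=
    (hmergeA.eqV _ _).1 (hψx.trans hψx'.symm)
  obtain ⟨r', hr', hseqr⟩ := (merge_string_move hcompl hv hw heq).1 th hx'
  have h2 : SEq A B v w sh r' := Relation.EqvGen.rel _ _ ⟨⟨ιV x, hcompl.reaches hx⟩,
    ⟨ιV x, hcompl.reaches hr'⟩, Or.inr ⟨sh, r', [], by simp, by simp, Or.inl ⟨x, hx, hr'⟩⟩⟩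
  exact Relation.EqvGen.trans _ _ _ (Relation.EqvGen.symm _ _ hseq)
    (Relation.EqvGen.trans _ _ _ h2
      (Relation.EqvGen.trans _ _ _ hseqr hseq'))

/-- `SEq`-related strings reach the same node of `D' = (Aᵐ)⁺`. -/
lemma seq_to_dprime (hcompl : IsCompletionOf A B ιV ιE) (hv : A.toPreAPFA.HasLevel v i)
    (hw : A.toPreAPFA.HasLevel w i) (hmergeA : IsMergeOf A {v, w} D ψV ψE)
    (hcompl' : IsCompletionOf D D' κV κE) {s t : List Sym} (h : SEq A B v w s t) :
    ∀ x₄ y₄ : V₄, D'.toPreAPFA.Reaches D'.toPreAPFA.root s x₄ →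
      D'.toPreAPFA.Reaches D'.toPreAPFA.root t y₄ → x₄ = y₄ := by
  have hpD'A : D'.p = A.p := hcompl'.p_eq.trans hmergeA.p_eq
  have hsymDB : ∀ j, D'.toAPFAGraph.symsAt j = B.toAPFAGraph.symsAt j := fun j => by
    rw [hcompl'.syms_eq, hmergeA.symsAt_eq, ← hcompl.syms_eq]
  have hpDB : D'.p = B.p := by rw [hpD'A, hcompl.p_eq]
  have toD' : ∀ (r : List Sym), (∃ z₁, B.toPreAPFA.Reaches B.toPreAPFA.root r z₁) →
      ∃ z₄, D'.toPreAPFA.Reaches D'.toPreAPFA.root r z₄ :=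
    fun r hb => lang_transfer hcompl'.complete (fun j => (hsymDB j).symm) hpDB.symm r hb
  induction h with
  | rel s t hst =>
    intro x₄ y₄ hs ht
    obtain ⟨hsB, htB, hcase⟩ := hst
    rcases hcase with ⟨h1, h2⟩ | ⟨s₀, t₀, u, rfl, rfl, hc⟩
    · have e1 : x₄ = D'.toPreAPFA.sink := D'.level_p_sink
        (show D'.toPreAPFA.HasLevel x₄ D'.p by rw [hpD'A, ← h1]; exact D'.reaches_level hs)
      have e2 : y₄ = D'.toPreAPFA.sink := D'.level_p_sink
        (show D'.toPreAPFA.HasLevel y₄ D'.p by rw [hpD'A, ← h2]; exact D'.reaches_level ht)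
      exact e1.trans e2.symm
    · obtain ⟨m₄, hsm, hsu⟩ := (D'.toPreAPFA.reaches_append).1 hs
      obtain ⟨m₄', htm, htu⟩ := (D'.toPreAPFA.reaches_append).1 ht
      have hmm : m₄ = m₄' := by
        rcases hc with ⟨m, h1, h2⟩ | ⟨h1, h2⟩
        · have e1 : m₄ = κV (ψV m) :=
            D'.reaches_det hsm (hcompl'.reaches (hmergeA.reaches h1))
          have e2 : m₄' = κV (ψV m) :=
            D'.reaches_det htm (hcompl'.reaches (hmergeA.reaches h2))
          exact e1.trans e2.symm
        · have hvw3 : ψV v = ψV w := (hmergeA.eqV v w).2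
            (Relation.EqvGen.rel _ _ ⟨v, Set.mem_insert _ _, w,
              Set.mem_insert_of_mem _ rfl, [], [], rfl, rfl, rfl⟩)
          have e1 : m₄ = κV (ψV v) :=
            D'.reaches_det hsm (hcompl'.reaches (hmergeA.reaches h1))
          have e2 : m₄' = κV (ψV w) :=
            D'.reaches_det htm (hcompl'.reaches (hmergeA.reaches h2))
          rw [e1, e2, hvw3]
      exact D'.reaches_det hsu (hmm ▸ htu)
  | refl s =>
    intro x₄ y₄ hs ht
    exact D'.reaches_det hs ht
  | symm s t h ih =>
    intro x₄ y₄ hs ht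
    exact (ih y₄ x₄ ht hs).symm
  | trans s r t h1 h2 ih1 ih2 =>
    intro x₄ y₄ hs ht
    rcases seq_pres hv hw (h1 : SEq A B v w s r) with rfl | ⟨_, hr, _⟩
    · exact ih2 _ _ hs ht
    · obtain ⟨z₄, hz⟩ := toD' r hr
      exact (ih1 _ _ hs hz).trans (ih2 _ _ hz ht)

/-- Nodes of `D'` reached by `SEq`-related realizable strings: the converse direction. -/
lemma dprime_eq_to_seq (hcompl : IsCompletionOf A B ιV ιE) (hv : A.toPreAPFA.HasLevel v i)
    (hw : A.toPreAPFA.HasLevel w i) (hmergeA : IsMergeOf A {v, w} D ψV ψE)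
    (hcompl' : IsCompletionOf D D' κV κE) {s t : List Sym} {x₄ : V₄}
    (hs : D'.toPreAPFA.Reaches D'.toPreAPFA.root s x₄)
    (ht : D'.toPreAPFA.Reaches D'.toPreAPFA.root t x₄) : SEq A B v w s t := by
  have hpD'A : D'.p = A.p := hcompl'.p_eq.trans hmergeA.p_eq
  have hsymDB : ∀ j, D'.toAPFAGraph.symsAt j = B.toAPFAGraph.symsAt j := fun j => by
    rw [hcompl'.syms_eq, hmergeA.symsAt_eq, ← hcompl.syms_eq]
  have hpDB : D'.p = B.p := by rw [hpD'A, hcompl.p_eq]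
  have toB : ∀ {r : List Sym} {z : V₄}, D'.toPreAPFA.Reaches D'.toPreAPFA.root r z →
      ∃ z₁, B.toPreAPFA.Reaches B.toPreAPFA.root r z₁ :=
    fun {r z} hd => lang_transfer hcompl.complete hsymDB hpDB r ⟨z, hd⟩
  by_cases hp : s.length = A.p
  · have hlt : t.length = s.length :=
      D'.level_unique (D'.reaches_level ht) (D'.reaches_level hs)
    exact Relation.EqvGen.rel _ _ ⟨toB hs, toB ht, Or.inl ⟨hp, hlt.trans hp⟩⟩
  · have hlt : s.length < D.p := by
      have := D'.level_le (D'.reaches_level hs)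
      rw [hpD'A] at this
      rw [hmergeA.p_eq]
      omega
    obtain ⟨s₀, t₀, u, m, hs0, ht0, hrs, hrt⟩ := hcompl'.split s.length s t x₄ rfl hs ht hlt
    have h0 : SEq A B v w s₀ t₀ := merge_eq_seq hcompl hv hw hmergeA hrs hrt
    rw [hs0, ht0]
    exact SEq.ext hv hw hcompl.complete hcompl.p_eq h0 u (hs0 ▸ toB hs)

/-- Merged nodes of `B` give `SEq`-related strings. -/
lemma beq_to_seq (hcompl : IsCompletionOf A B ιV ιE) (hv : A.toPreAPFA.HasLevel v i)
    (hw : A.toPreAPFA.HasLevel w i) {x₁ y₁ : V₁}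
    (h : Relation.EqvGen (B.toPreAPFA.mergeRelV {ιV v, ιV w}) x₁ y₁) :
    ∀ s t, B.toPreAPFA.Reaches B.toPreAPFA.root s x₁ →
      B.toPreAPFA.Reaches B.toPreAPFA.root t y₁ → SEq A B v w s t := by
  induction h with
  | rel x₁ y₁ hxy =>
    intro s t hs ht
    obtain ⟨a', ha', b', hb', es, fs, hpx, hpy, hsyms⟩ := hxy
    obtain ⟨pv, hpv⟩ := A.node_string v
    obtain ⟨pw, hpw⟩ := A.node_string w
    simp only [Set.mem_insert_iff, Set.mem_singleton_iff] at ha' hb'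
    have hA : ∃ va sa, va ∈ ({v, w} : Set V) ∧
        A.toPreAPFA.Reaches A.toPreAPFA.root sa va ∧ ιV va = a' := by
      rcases ha' with rfl | rfl
      · exact ⟨v, pv, Set.mem_insert _ _, hpv, rfl⟩
      · exact ⟨w, pw, Set.mem_insert_of_mem _ rfl, hpw, rfl⟩
    have hB : ∃ vb sb, vb ∈ ({v, w} : Set V) ∧
        A.toPreAPFA.Reaches A.toPreAPFA.root sb vb ∧ ιV vb = b' := by
      rcases hb' with rfl | rfl
      · exact ⟨v, pv, Set.mem_insert _ _, hpv, rfl⟩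
      · exact ⟨w, pw, Set.mem_insert_of_mem _ rfl, hpw, rfl⟩
    obtain ⟨va, sa, hva, hsa, rfl⟩ := hA
    obtain ⟨vb, sb, hvb, hsb, rfl⟩ := hB
    have hx1 : B.toPreAPFA.Reaches B.toPreAPFA.root (sa ++ es.map B.toPreAPFA.sym) x₁ :=
      B.toPreAPFA.reaches_trans (hcompl.reaches hsa) ⟨es, hpx, rfl⟩
    have hy1 : B.toPreAPFA.Reaches B.toPreAPFA.root (sb ++ es.map B.toPreAPFA.sym) y₁ := by
      rw [hsyms]
      exact B.toPreAPFA.reaches_trans (hcompl.reaches hsb) ⟨fs, hpy, rfl⟩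
    have h1 : SEq A B v w s (sa ++ es.map B.toPreAPFA.sym) := breach_seq hcompl hs hx1
    have h3 : SEq A B v w (sb ++ es.map B.toPreAPFA.sym) t := breach_seq hcompl hy1 ht
    have hmid : SEq A B v w (sa ++ es.map B.toPreAPFA.sym)
        (sb ++ es.map B.toPreAPFA.sym) :=
      pair_seq hcompl hva hvb hsa hsb ⟨x₁, hx1⟩ ⟨y₁, hy1⟩
    exact Relation.EqvGen.trans _ _ _ h1 (Relation.EqvGen.trans _ _ _ hmid h3)
  | refl x₁ =>
    intro s t hs ht
    exact breach_seq hcompl hs ht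
  | symm x y h ih =>
    intro s t hs ht
    exact Relation.EqvGen.symm _ _ (ih t s ht hs)
  | trans x y z h1 h2 ih1 ih2 =>
    intro s t hs ht
    obtain ⟨r, hrB⟩ := B.node_string y
    exact Relation.EqvGen.trans _ _ _ (ih1 s r hs hrB) (ih2 r t hrB ht)

/-- `SEq`-related strings reach merged nodes of `B`. -/
lemma seq_to_beq (hcompl : IsCompletionOf A B ιV ιE) (hv : A.toPreAPFA.HasLevel v i)
    (hw : A.toPreAPFA.HasLevel w i) {s t : List Sym} (h : SEq A B v w s t) :
    ∀ x₁ y₁ : V₁, B.toPreAPFA.Reaches B.toPreAPFA.root s x₁ →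
      B.toPreAPFA.Reaches B.toPreAPFA.root t y₁ →
      Relation.EqvGen (B.toPreAPFA.mergeRelV {ιV v, ιV w}) x₁ y₁ := by
  induction h with
  | rel s t hst =>
    intro x₁ y₁ hs ht
    obtain ⟨hsB, htB, hcase⟩ := hst
    rcases hcase with ⟨h1, h2⟩ | ⟨s₀, t₀, u, rfl, rfl, hc⟩
    · have e1 : x₁ = B.toPreAPFA.sink := B.level_p_sink
        (show B.toPreAPFA.HasLevel x₁ B.p by rw [hcompl.p_eq, ← h1]; exact B.reaches_level hs)
      have e2 : y₁ = B.toPreAPFA.sink := B.level_p_sink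
        (show B.toPreAPFA.HasLevel y₁ B.p by rw [hcompl.p_eq, ← h2]; exact B.reaches_level ht)
      rw [e1, e2]
      exact Relation.EqvGen.refl _
    · obtain ⟨m₁, hsm, hsu⟩ := (B.toPreAPFA.reaches_append).1 hs
      obtain ⟨m₁', htm, htu⟩ := (B.toPreAPFA.reaches_append).1 ht
      rcases hc with ⟨m, h1, h2⟩ | ⟨h1, h2⟩
      · have e1 : m₁ = ιV m := B.reaches_det hsm (hcompl.reaches h1)
        have e2 : m₁' = ιV m := B.reaches_det htm (hcompl.reaches h2)
        have : x₁ = y₁ := B.reaches_det (e1 ▸ hsu) (e2 ▸ htu)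
        rw [this]
        exact Relation.EqvGen.refl _
      · have e1 : m₁ = ιV v := B.reaches_det hsm (hcompl.reaches h1)
        have e2 : m₁' = ιV w := B.reaches_det htm (hcompl.reaches h2)
        obtain ⟨es, hpes, hmes⟩ := (e1 ▸ hsu : B.toPreAPFA.Reaches (ιV v) u x₁)
        obtain ⟨fs, hpfs, hmfs⟩ := (e2 ▸ htu : B.toPreAPFA.Reaches (ιV w) u y₁)
        exact Relation.EqvGen.rel _ _ ⟨ιV v, Set.mem_insert _ _, ιV w,
          Set.mem_insert_of_mem _ rfl, es, fs, hpes, hpfs, hmes.trans hmfs.symm⟩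
  | refl s =>
    intro x₁ y₁ hs ht
    rw [B.reaches_det hs ht]
    exact Relation.EqvGen.refl _
  | symm s t h ih =>
    intro x₁ y₁ hs ht
    exact Relation.EqvGen.symm _ _ (ih y₁ x₁ ht hs)
  | trans s r t h1 h2 ih1 ih2 =>
    intro x₁ y₁ hs ht
    rcases seq_pres hv hw (h1 : SEq A B v w s r) with rfl | ⟨_, ⟨z₁, hz⟩, _⟩
    · exact ih2 _ _ hs ht
    · exact Relation.EqvGen.trans _ _ _ (ih1 _ _ hs hz) (ih2 _ _ hz ht)

/-- Merged nodes of `B` have equal levels. -/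
lemma beq_level (hcompl : IsCompletionOf A B ιV ιE) (hv : A.toPreAPFA.HasLevel v i)
    (hw : A.toPreAPFA.HasLevel w i) {x y : V₁}
    (h : Relation.EqvGen (B.toPreAPFA.mergeRelV {ιV v, ιV w}) x y) :
    ∀ ℓ, B.toPreAPFA.HasLevel x ℓ ↔ B.toPreAPFA.HasLevel y ℓ := by
  induction h with
  | rel x y hxy =>
    obtain ⟨a', ha', b', hb', es, fs, hpx, hpy, hsyms⟩ := hxy
    simp only [Set.mem_insert_iff, Set.mem_singleton_iff] at ha' hb'
    have hla : B.toPreAPFA.HasLevel a' i := by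
      rcases ha' with rfl | rfl
      · exact hcompl.hasLevel hv
      · exact hcompl.hasLevel hw
    have hlb : B.toPreAPFA.HasLevel b' i := by
      rcases hb' with rfl | rfl
      · exact hcompl.hasLevel hv
      · exact hcompl.hasLevel hw
    have hx : B.toPreAPFA.HasLevel x (i + es.length) := by
      have := B.hasLevel_extend hla (⟨es, hpx, rfl⟩ :
        B.toPreAPFA.Reaches a' (es.map B.toPreAPFA.sym) x)
      simpa using this
    have hy : B.toPreAPFA.HasLevel y (i + fs.length) := by
      have := B.hasLevel_extend hlb (⟨fs, hpy, rfl⟩ :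
        B.toPreAPFA.Reaches b' (fs.map B.toPreAPFA.sym) y)
      simpa using this
    have hlen : es.length = fs.length := by
      have := congrArg List.length hsyms
      simpa using this
    intro ℓ
    constructor
    · intro h'
      have : ℓ = i + es.length := B.level_unique h' hx
      rw [this, hlen]
      exact hy
    · intro h'
      have : ℓ = i + fs.length := B.level_unique h' hy
      rw [this, ← hlen]
      exact hx
  | refl x => exact fun ℓ => Iff.rfl
  | symm x y h ih => exact fun ℓ => (ih ℓ).symm
  | trans x y z h1 h2 ih1 ih2 => exact fun ℓ => (ih1 ℓ).trans (ih2 ℓ)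

/-- Merged edges of `B` are determined by merged sources and equal symbols. -/
lemma beqE_to {x : V₁} {e f : E₁}
    (h : Relation.EqvGen (B.toPreAPFA.mergeRelE {ιV v, ιV w}) e f) :
    B.toPreAPFA.sym e = B.toPreAPFA.sym f ∧
      Relation.EqvGen (B.toPreAPFA.mergeRelV {ιV v, ιV w})
        (B.toPreAPFA.src e) (B.toPreAPFA.src f) := by
  induction h with
  | rel e f hef =>
    obtain ⟨a', ha', b', hb', es, fs, hpe, hpf, hsyms⟩ := hef
    obtain ⟨me, hpe1, hpe2⟩ := (B.toPreAPFA.isPathFrom_append).1 hpe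
    obtain ⟨mf, hpf1, hpf2⟩ := (B.toPreAPFA.isPathFrom_append).1 hpf
    obtain ⟨hsrce, -⟩ := hpe2
    obtain ⟨hsrcf, -⟩ := hpf2
    rw [List.map_append, List.map_append] at hsyms
    obtain ⟨h1, h2⟩ := List.append_inj' hsyms (by simp)
    have hsym : B.toPreAPFA.sym e = B.toPreAPFA.sym f := by simpa using h2
    have hpe1' : B.toPreAPFA.IsPathFrom a' (B.toPreAPFA.src e) es := by
      rw [hsrce]; exact hpe1
    have hpf1' : B.toPreAPFA.IsPathFrom b' (B.toPreAPFA.src f) fs := by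
      rw [hsrcf]; exact hpf1
    exact ⟨hsym, Relation.EqvGen.rel _ _ ⟨a', ha', b', hb', es, fs, hpe1', hpf1', h1⟩⟩
  | refl e => exact ⟨rfl, Relation.EqvGen.refl _⟩
  | symm e f h ih => exact ⟨ih.1.symm, Relation.EqvGen.symm _ _ ih.2⟩
  | trans e g f h1 h2 ih1 ih2 =>
    exact ⟨ih1.1.trans ih2.1, Relation.EqvGen.trans _ _ _ ih1.2 ih2.2⟩

/-- Conversely: equal symbols on merged sources give merged edges. -/
lemma beqE_from (hcompl : IsCompletionOf A B ιV ιE) (hv : A.toPreAPFA.HasLevel v i)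
    (hw : A.toPreAPFA.HasLevel w i) {x y : V₁}
    (h : Relation.EqvGen (B.toPreAPFA.mergeRelV {ιV v, ιV w}) x y) :
    ∀ e f : E₁, B.toPreAPFA.src e = x → B.toPreAPFA.src f = y →
      B.toPreAPFA.sym e = B.toPreAPFA.sym f →
      Relation.EqvGen (B.toPreAPFA.mergeRelE {ιV v, ιV w}) e f := by
  induction h with
  | rel x y hxy =>
    intro e f hex hfy hsym
    obtain ⟨a', ha', b', hb', es, fs, hpx, hpy, hsyms⟩ := hxy
    refine Relation.EqvGen.rel _ _ ⟨a', ha', b', hb', es, fs, ?_, ?_, ?_⟩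
    · exact (B.toPreAPFA.isPathFrom_append).2 ⟨x, hpx, hex, rfl⟩
    · exact (B.toPreAPFA.isPathFrom_append).2 ⟨y, hpy, hfy, rfl⟩
    · simp only [List.map_append, List.map_cons, List.map_nil]
      rw [hsyms, hsym]
  | refl x =>
    intro e f hex hfy hsym
    have : e = f := B.sym_inj e f (hex.trans hfy.symm) hsym
    rw [this]
    exact Relation.EqvGen.refl _
  | symm x y h ih =>
    intro e f hex hfy hsym
    exact Relation.EqvGen.symm _ _ (ih f e hfy hex hsym.symm)
  | trans x y z h1 h2 ih1 ih2 =>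
    intro e f hex hfz hsym
    obtain ⟨ℓ, hℓ⟩ := B.node_level x
    have hy : B.toPreAPFA.HasLevel y ℓ := (beq_level hcompl hv hw h1 ℓ).1 hℓ
    have hsrcℓ : B.toPreAPFA.HasLevel (B.toPreAPFA.src e) ℓ := by rw [hex]; exact hℓ
    have hmem : B.toPreAPFA.sym e ∈ B.toAPFAGraph.symsAt ℓ := B.sym_mem_symsAt hsrcℓ
    have hlt : ℓ < B.p := B.edge_level_lt hsrcℓ
    obtain ⟨g, hg1, hg2⟩ := hcompl.complete y ℓ hy hlt (B.toPreAPFA.sym e) hmem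
    exact Relation.EqvGen.trans _ _ _ (ih1 e g hex hg1 hg2.symm)
      (ih2 g f hg1 hfz (hg2.trans hsym))

end WithData

end MainLemmas

/-- Let `A` be an APFA and let `v, w` be two distinct states at the same
level `i < p` of `A`.  Let `B = A⁺` be a completion of `A` (embedding `(ιV, ιE)`), let
`C = (A⁺)ᵐ` be the result of merging `ιV v` and `ιV w` in `B`, let `D = Aᵐ` be the result
of merging `v` and `w` in `A`, and let `D' = (Aᵐ)⁺` be a completion of `D` (embedding
`(κV, κE)`).  Then completion and merging commute: `(A⁺)ᵐ` and `(Aᵐ)⁺` are identical,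
i.e. there is an isomorphism of symbol-labelled multigraphs `C ≅ D'` preserving root and
sink and compatible with the merging and completion maps. -/
theorem merging_completion_commute
    {V : Type u} {E : Type v} {V₁ : Type u} {E₁ : Type v} {V₂ : Type u} {E₂ : Type v}
    {V₃ : Type u} {E₃ : Type v} {V₄ : Type u} {E₄ : Type v} {Sym : Type w}
    [Fintype V] [Fintype E] [Fintype V₁] [Fintype E₁] [Fintype V₂] [Fintype E₂]
    [Fintype V₃] [Fintype E₃] [Fintype V₄] [Fintype E₄]
    (A : APFA V E Sym) (v w : V) (i : ℕ)
    (hv : A.toPreAPFA.HasLevel v i) (hw : A.toPreAPFA.HasLevel w i)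
    (hvw : v ≠ w) (hip : i < A.p)
    (B : APFA V₁ E₁ Sym) (ιV : V → V₁) (ιE : E → E₁)
    (hcompl : IsCompletionOf A B ιV ιE)
    (C : APFA V₂ E₂ Sym) (φV : V₁ → V₂) (φE : E₁ → E₂)
    (hmergeB : IsMergeOf B {ιV v, ιV w} C φV φE)
    (D : APFA V₃ E₃ Sym) (ψV : V → V₃) (ψE : E → E₃)
    (hmergeA : IsMergeOf A {v, w} D ψV ψE)
    (D' : APFA V₄ E₄ Sym) (κV : V₃ → V₄) (κE : E₃ → E₄)
    (hcompl' : IsCompletionOf D D' κV κE) :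
    ∃ (gV : V₂ ≃ V₄) (gE : E₂ ≃ E₄),
      (∀ e : E₂, D'.src (gE e) = gV (C.src e)) ∧
      (∀ e : E₂, D'.tgt (gE e) = gV (C.tgt e)) ∧
      (∀ e : E₂, D'.sym (gE e) = C.sym e) ∧
      gV C.root = D'.root ∧ gV C.sink = D'.sink ∧
      (∀ x : V, gV (φV (ιV x)) = κV (ψV x)) ∧
      (∀ e : E, gE (φE (ιE e)) = κE (ψE e)) := by
  classical
  -- language transfer between B and D'
  have hsymDB : ∀ j, D'.toAPFAGraph.symsAt j = B.toAPFAGraph.symsAt j := fun j => by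
    rw [hcompl'.syms_eq, hmergeA.symsAt_eq, ← hcompl.syms_eq]
  have hpDB : D'.p = B.p := by rw [hcompl'.p_eq, hmergeA.p_eq, hcompl.p_eq]
  have toD' : ∀ (r : List Sym), (∃ z₁, B.toPreAPFA.Reaches B.toPreAPFA.root r z₁) →
      ∃ z₄, D'.toPreAPFA.Reaches D'.toPreAPFA.root r z₄ :=
    fun r hb => lang_transfer hcompl'.complete (fun j => (hsymDB j).symm) hpDB.symm r hb
  have toB : ∀ (r : List Sym), (∃ z₄, D'.toPreAPFA.Reaches D'.toPreAPFA.root r z₄) →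
      ∃ z₁, B.toPreAPFA.Reaches B.toPreAPFA.root r z₁ :=
    fun r hd => lang_transfer hcompl.complete hsymDB hpDB r hd
  -- choose a string and a D'-node for each node of B
  have hstr : ∀ x₁ : V₁, ∃ (s : List Sym) (x₄ : V₄),
      B.toPreAPFA.Reaches B.toPreAPFA.root s x₁ ∧
      D'.toPreAPFA.Reaches D'.toPreAPFA.root s x₄ := by
    intro x₁
    obtain ⟨s, hs⟩ := B.node_string x₁
    obtain ⟨x₄, hx₄⟩ := toD' s ⟨x₁, hs⟩
    exact ⟨s, x₄, hs, hx₄⟩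
  choose sOf nOf hs1 hs2 using hstr
  have P1 : ∀ (x₁ : V₁) (s : List Sym) (x₄ : V₄),
      B.toPreAPFA.Reaches B.toPreAPFA.root s x₁ →
      D'.toPreAPFA.Reaches D'.toPreAPFA.root s x₄ → nOf x₁ = x₄ := by
    intro x₁ s x₄ hB hD
    have hseq : SEq A B v w (sOf x₁) s := breach_seq hcompl (hs1 x₁) hB
    exact seq_to_dprime hcompl hv hw hmergeA hcompl' hseq _ _ (hs2 x₁) hD
  have P2 : ∀ x₁ y₁ : V₁, nOf x₁ = nOf y₁ ↔
      Relation.EqvGen (B.toPreAPFA.mergeRelV {ιV v, ιV w}) x₁ y₁ := by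
    intro x₁ y₁
    constructor
    · intro h
      have hseq : SEq A B v w (sOf x₁) (sOf y₁) :=
        dprime_eq_to_seq hcompl hv hw hmergeA hcompl' (hs2 x₁)
          (by rw [h]; exact hs2 y₁)
      exact seq_to_beq hcompl hv hw hseq x₁ y₁ (hs1 x₁) (hs1 y₁)
    · intro h
      have hseq := beq_to_seq hcompl hv hw h (sOf x₁) (sOf y₁) (hs1 x₁) (hs1 y₁)
      exact seq_to_dprime hcompl hv hw hmergeA hcompl' hseq _ _ (hs2 x₁) (hs2 y₁)
  -- choose a string and a D'-edge for each edge of B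
  have hstrE : ∀ e₁ : E₁, ∃ (s : List Sym) (e₄ : E₄),
      B.toPreAPFA.Reaches B.toPreAPFA.root s (B.toPreAPFA.src e₁) ∧
      D'.toPreAPFA.Reaches D'.toPreAPFA.root s (D'.toPreAPFA.src e₄) ∧
      D'.toPreAPFA.sym e₄ = B.toPreAPFA.sym e₁ := by
    intro e₁
    obtain ⟨s, hs⟩ := B.node_string (B.toPreAPFA.src e₁)
    have hsB : B.toPreAPFA.Reaches B.toPreAPFA.root (s ++ [B.toPreAPFA.sym e₁])
        (B.toPreAPFA.tgt e₁) := (B.toPreAPFA.reaches_snoc).2 ⟨_, e₁, hs, rfl, rfl, rfl⟩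
    obtain ⟨z₄, hz⟩ := toD' _ ⟨_, hsB⟩
    obtain ⟨m₄, e₄, hm, hsrc4, hsym4, htgt4⟩ := (D'.toPreAPFA.reaches_snoc).1 hz
    exact ⟨s, e₄, hs, by rw [hsrc4]; exact hm, hsym4⟩
  choose sE eOf hE1 hE2 hE3 using hstrE
  have P1E : ∀ (e₁ : E₁) (s : List Sym) (e₄ : E₄),
      B.toPreAPFA.Reaches B.toPreAPFA.root s (B.toPreAPFA.src e₁) →
      D'.toPreAPFA.Reaches D'.toPreAPFA.root s (D'.toPreAPFA.src e₄) →
      D'.toPreAPFA.sym e₄ = B.toPreAPFA.sym e₁ → eOf e₁ = e₄ := by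
    intro e₁ s e₄ hB hD hsym
    have hseq : SEq A B v w (sE e₁) s := breach_seq hcompl (hE1 e₁) hB
    have hsrc : D'.toPreAPFA.src (eOf e₁) = D'.toPreAPFA.src e₄ :=
      seq_to_dprime hcompl hv hw hmergeA hcompl' hseq _ _ (hE2 e₁) hD
    exact D'.sym_inj _ _ hsrc ((hE3 e₁).trans hsym.symm)
  have P2E : ∀ e₁ f₁ : E₁, eOf e₁ = eOf f₁ ↔
      Relation.EqvGen (B.toPreAPFA.mergeRelE {ιV v, ιV w}) e₁ f₁ := by
    intro e₁ f₁
    constructor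
    · intro h
      have hsym : B.toPreAPFA.sym e₁ = B.toPreAPFA.sym f₁ := by
        rw [← hE3 e₁, ← hE3 f₁, h]
      have hseq : SEq A B v w (sE e₁) (sE f₁) :=
        dprime_eq_to_seq hcompl hv hw hmergeA hcompl' (hE2 e₁)
          (by rw [h]; exact hE2 f₁)
      have hsrc : Relation.EqvGen (B.toPreAPFA.mergeRelV {ιV v, ιV w})
          (B.toPreAPFA.src e₁) (B.toPreAPFA.src f₁) :=
        seq_to_beq hcompl hv hw hseq _ _ (hE1 e₁) (hE1 f₁)
      exact beqE_from hcompl hv hw hsrc e₁ f₁ rfl rfl hsym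
    · intro h
      obtain ⟨hsym, hsrc⟩ := beqE_to (x := B.toPreAPFA.src e₁) h
      have hseq : SEq A B v w (sE e₁) (sE f₁) :=
        beq_to_seq hcompl hv hw hsrc _ _ (hE1 e₁) (hE1 f₁)
      have h4 : D'.toPreAPFA.src (eOf e₁) = D'.toPreAPFA.src (eOf f₁) :=
        seq_to_dprime hcompl hv hw hmergeA hcompl' hseq _ _ (hE2 e₁) (hE2 f₁)
      exact D'.sym_inj _ _ h4 (by rw [hE3 e₁, hE3 f₁, hsym])
  -- the maps
  choose pre hpre using hmergeB.surjV
  choose preE hpreE using hmergeB.surjE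
  set gV0 : V₂ → V₄ := fun x₂ => nOf (pre x₂) with hgV0
  set gE0 : E₂ → E₄ := fun e₂ => eOf (preE e₂) with hgE0
  have gphi : ∀ x₁ : V₁, gV0 (φV x₁) = nOf x₁ := fun x₁ =>
    (P2 _ _).2 ((hmergeB.eqV _ _).1 (hpre (φV x₁)))
  have gphiE : ∀ e₁ : E₁, gE0 (φE e₁) = eOf e₁ := fun e₁ =>
    (P2E _ _).2 ((hmergeB.eqE _ _).1 (hpreE (φE e₁)))
  have hbij : Function.Bijective gV0 := by
    constructor
    · intro x₂ y₂ h
      have := (hmergeB.eqV _ _).2 ((P2 _ _).1 h)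
      rwa [hpre x₂, hpre y₂] at this
    · intro x₄
      obtain ⟨r, hr⟩ := D'.node_string x₄
      obtain ⟨x₁, hx₁⟩ := toB r ⟨x₄, hr⟩
      exact ⟨φV x₁, by rw [gphi x₁]; exact P1 x₁ r x₄ hx₁ hr⟩
  have hbijE : Function.Bijective gE0 := by
    constructor
    · intro e₂ f₂ h
      have := (hmergeB.eqE _ _).2 ((P2E _ _).1 h)
      rwa [hpreE e₂, hpreE f₂] at this
    · intro e₄
      obtain ⟨r, hr⟩ := D'.node_string (D'.toPreAPFA.src e₄)
      have hr4 : D'.toPreAPFA.Reaches D'.toPreAPFA.root (r ++ [D'.toPreAPFA.sym e₄])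
          (D'.toPreAPFA.tgt e₄) := (D'.toPreAPFA.reaches_snoc).2 ⟨_, e₄, hr, rfl, rfl, rfl⟩
      obtain ⟨z₁, hz₁⟩ := toB _ ⟨_, hr4⟩
      obtain ⟨m₁, e₁, hm₁, hsrc1, hsym1, htgt1⟩ := (B.toPreAPFA.reaches_snoc).1 hz₁
      refine ⟨φE e₁, ?_⟩
      rw [gphiE e₁]
      exact P1E e₁ r e₄ (by rw [hsrc1]; exact hm₁) hr hsym1.symm
  refine ⟨Equiv.ofBijective gV0 hbij, Equiv.ofBijective gE0 hbijE, ?_, ?_, ?_, ?_, ?_, ?_, ?_⟩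
  · intro e₂
    simp only [Equiv.ofBijective_apply]
    rw [← hpreE e₂, hmergeB.src_comm, gphi, gphiE]
    exact (P1 _ _ _ (hE1 _) (hE2 _)).symm
  · intro e₂
    simp only [Equiv.ofBijective_apply]
    rw [← hpreE e₂, hmergeB.tgt_comm, gphi, gphiE]
    refine (P1 _ (sE (preE e₂) ++ [B.toPreAPFA.sym (preE e₂)]) _ ?_ ?_).symm
    · exact (B.toPreAPFA.reaches_snoc).2 ⟨_, preE e₂, hE1 _, rfl, rfl, rfl⟩
    · exact (D'.toPreAPFA.reaches_snoc).2 ⟨_, eOf (preE e₂), hE2 _, rfl, hE3 _, rfl⟩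
  · intro e₂
    simp only [Equiv.ofBijective_apply]
    rw [← hpreE e₂, hmergeB.sym_comm, gphiE]
    exact hE3 _
  · simp only [Equiv.ofBijective_apply]
    rw [← hmergeB.root_comm, gphi]
    exact P1 _ [] _ (B.toPreAPFA.reaches_refl _) (D'.toPreAPFA.reaches_refl _)
  · simp only [Equiv.ofBijective_apply]
    rw [← hmergeB.sink_comm, gphi]
    obtain ⟨r, hr⟩ := A.node_string A.toPreAPFA.sink
    refine P1 _ r _ ?_ ?_
    · rw [← hcompl.sink_comm]; exact hcompl.reaches hr
    · rw [← hcompl'.sink_comm, ← hmergeA.sink_comm]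
      exact hcompl'.reaches (hmergeA.reaches hr)
  · intro x
    simp only [Equiv.ofBijective_apply]
    rw [gphi]
    obtain ⟨r, hr⟩ := A.node_string x
    exact P1 _ r _ (hcompl.reaches hr) (hcompl'.reaches (hmergeA.reaches hr))
  · intro e
    simp only [Equiv.ofBijective_apply]
    rw [gphiE]
    obtain ⟨r, hr⟩ := A.node_string (A.toPreAPFA.src e)
    refine P1E _ r _ ?_ ?_ ?_
    · rw [hcompl.src_comm]; exact hcompl.reaches hr
    · rw [hcompl'.src_comm, hmergeA.src_comm]
      exact hcompl'.reaches (hmergeA.reaches hr)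
    · rw [hcompl'.sym_comm, hmergeA.sym_comm, hcompl.sym_comm]
end

section
/- Let G be a simple undirected graph on vertices {1,...,p} such that for each i = 2,...,p, adj(i) ∩ {1,...,i-1} ⊆ (adj(i-1) ∩ {1,...,i-2}) ∪ {i-1}, where adj(v) denotes the set of neighbours of v in G. Then G is decomposable (chordal): every cycle in G of length at least 4 has a chord. -/
/-!
By the running condition every lower neighbour `j` of `i` is adjacent to all of `j + 1, …, i`, so
the lower neighbours of each vertex form a clique (the reversed ordering is a perfect elimination
ordering). On a cycle of length at least 4, the two cycle-neighbours of its largest vertex are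
therefore adjacent, and since the cycle is long this edge is a chord.
-/

namespace SimpleGraph.Walk

variable {V : Type*} {G : SimpleGraph V} {u : V}

theorem IsCycle.snd_penultimate_notMem_edges {c : G.Walk u u} (hc : c.IsCycle)
    (hlen : 4 ≤ c.length) : s(c.snd, c.penultimate) ∉ c.edges := by
  intro he
  have hnb : c.penultimate ∈ c.toSubgraph.neighborSet (c.getVert 1) :=
    adj_toSubgraph_iff_mem_edges.mpr he
  rw [hc.neighborSet_toSubgraph_internal one_ne_zero (by omega)] at hnb
  rcases hnb with h | h
  · have := hc.getVert_injOn' (by simp : c.length - 1 ∈ {i | i ≤ c.length - 1})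
      (by simp : 1 - 1 ∈ {i | i ≤ c.length - 1}) h
    omega
  · have := hc.getVert_injOn (by simp; omega : c.length - 1 ∈ {i | 1 ≤ i ∧ i ≤ c.length})
      (by simp; omega : 1 + 1 ∈ {i | 1 ≤ i ∧ i ≤ c.length}) h
    omega

theorem IsCycle.exists_isChord_of_isClique [DecidableEq V] {c : G.Walk u u} (hc : c.IsCycle)
    (hlen : 4 ≤ c.length) {w : V} (hw : w ∈ c.support)
    (hclique : G.IsClique {x | x ∈ c.support ∧ G.Adj w x}) : ∃ e, c.IsChord e := by
  -- started at `w`, the cycle has the two cycle-neighbours of `w` as second and penultimate vertex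
  set c' := c.rotate w hw
  have hc' : c'.IsCycle := hc.rotate hw
  have hnil : ¬ c'.Nil := hc'.not_nil
  have ha : c'.snd ∈ c.support := (mem_support_rotate_iff ..).mp (getVert_mem_support ..)
  have hb : c'.penultimate ∈ c.support := (mem_support_rotate_iff ..).mp (getVert_mem_support ..)
  refine ⟨s(c'.snd, c'.penultimate), isChord_sym2Mk.mpr ⟨?_, fun he => ?_, ha, hb⟩⟩
  · exact hclique ⟨ha, adj_snd hnil⟩ ⟨hb, (adj_penultimate hnil).symm⟩ hc'.snd_ne_penultimate
  · exact hc'.snd_penultimate_notMem_edges (by simpa [c'] using hlen)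
      ((rotate_edges ..).mem_iff.mpr he)

end SimpleGraph.Walk

namespace SimpleGraph

variable {G : SimpleGraph ℕ}

theorem adj_pred_of_adj (p : ℕ)
    (hvert : ∀ i j : ℕ, G.Adj i j → i ∈ Finset.Icc 1 p ∧ j ∈ Finset.Icc 1 p)
    (hrun : ∀ i, 2 ≤ i → i ≤ p → ∀ j, G.Adj i j → j < i →
      (j = i - 1 ∨ (G.Adj (i - 1) j ∧ j < i - 1)))
    (i j : ℕ) (hij : G.Adj i j) (hji : j + 1 < i) : G.Adj (i - 1) j := by
  have hip : i ≤ p := (Finset.mem_Icc.mp (hvert i j hij).1).2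
  rcases hrun i (by omega) hip j hij (by omega) with h | h
  · omega
  · exact h.1

variable (hpred : ∀ i j, G.Adj i j → j + 1 < i → G.Adj (i - 1) j)
include hpred

theorem adj_of_adj_of_lt_of_le {i j k : ℕ} (hij : G.Adj i j) (hjk : j < k) (hki : k ≤ i) :
    G.Adj k j := by
  induction i, hki using Nat.le_induction with
  | base => exact hij
  | succ i hki ih => exact ih (by simpa using hpred (i + 1) j hij (by omega))

theorem isClique_setOf_lt_adj (i : ℕ) : G.IsClique {j | j < i ∧ G.Adj i j} := by
  rintro j ⟨hji, hij⟩ k ⟨hki, hik⟩ hjk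
  rcases lt_or_gt_of_ne hjk with h | h
  · exact (adj_of_adj_of_lt_of_le hpred hij h hki.le).symm
  · exact adj_of_adj_of_lt_of_le hpred hik h hji.le

end SimpleGraph

/-- **Statement 15.** Let `G` be a simple undirected graph on the vertices `{1, …, p}`
(formalized as a graph on `ℕ` all of whose edges join vertices in `{1, …, p}`) such that
for each `i = 2, …, p`,
`adj(i) ∩ {1, …, i-1} ⊆ (adj(i-1) ∩ {1, …, i-2}) ∪ {i-1}`.
Then `G` is decomposable (chordal): every cycle of length at least 4 has a chord, i.e.
an edge of `G` joining two vertices of the cycle that are not consecutive on the cycle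
(equivalently, an edge between vertices of the cycle that is not an edge of the cycle). -/
theorem running_adjacency_implies_chordal
    (p : ℕ) (G : SimpleGraph ℕ)
    (hvert : ∀ i j : ℕ, G.Adj i j → i ∈ Finset.Icc 1 p ∧ j ∈ Finset.Icc 1 p)
    (hrun : ∀ i, 2 ≤ i → i ≤ p → ∀ j, G.Adj i j → j < i →
      (j = i - 1 ∨ (G.Adj (i - 1) j ∧ j < i - 1))) :
    ∀ (v : ℕ) (c : G.Walk v v), c.IsCycle → 4 ≤ c.length →
      ∃ x y : ℕ, G.Adj x y ∧ x ∈ c.support ∧ y ∈ c.support ∧ s(x, y) ∉ c.edges := by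
  intro v c hc hlen
  obtain ⟨m, hm, hmax⟩ := c.support.toFinset.exists_max_image id ⟨v, by simp⟩
  have hclique : G.IsClique {x | x ∈ c.support ∧ G.Adj m x} :=
    (G.isClique_setOf_lt_adj (G.adj_pred_of_adj p hvert hrun) m).subset <| by
      rintro x ⟨hx, hmx⟩
      exact ⟨(hmax x (by simpa using hx)).lt_of_ne hmx.ne', hmx⟩
  obtain ⟨e, he⟩ := hc.exists_isChord_of_isClique hlen (by simpa using hm) hclique
  induction e using Sym2.ind with
  | h x y =>
    obtain ⟨hxy, hnot, hx, hy⟩ := SimpleGraph.Walk.isChord_sym2Mk.mp he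
    exact ⟨x, y, hxy, hx, hy, hnot⟩
end
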